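/- Let G be a graph on n vertices and σ a signature on G. If σ' is a signature switching-equivalent to σ whose set of negative edges has minimum cardinality among all signatures equivalent to σ, then in the subgraph formed by the negative edges of σ', every vertex has degree at most ⌊(n-1)/2⌋. -/
import Mathlib


/-- The set of edges of `G` with exactly one endpoint in `S`. -/
def cutG {V : Type*} [Fintype V] [DecidableEq V] (G : SimpleGraph V)
    [DecidableRel G.Adj] (S : Finset V) : Finset (Sym2 V) :=
  ((Finset.univ ×ˢ Finset.univ).filter
    (fun p : V × V => G.Adj p.1 p.2 ∧ p.1 ∈ S ∧ p.2 ∉ S)).image (fun p => s(p.1, p.2))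

/-- Signatures, identified with their negative edge sets, are switching
equivalent iff one is obtained from the other by switching at a vertex set. -/
def SwEquiv {V : Type*} [Fintype V] [DecidableEq V] (G : SimpleGraph V)
    [DecidableRel G.Adj] (Sg₁ Sg₂ : Finset (Sym2 V)) : Prop :=
  ∃ S : Finset V, Sg₂ = symmDiff Sg₁ (cutG G S)

lemma mem_cutG {V : Type*} [Fintype V] [DecidableEq V] (G : SimpleGraph V)
    [DecidableRel G.Adj] (S : Finset V) (a b : V) :
    s(a, b) ∈ cutG G S ↔ G.Adj a b ∧ ((a ∈ S ∧ b ∉ S) ∨ (b ∈ S ∧ a ∉ S)) := by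
  unfold cutG
  simp only [Finset.mem_image, Finset.mem_filter, Finset.mem_product, Finset.mem_univ,
    true_and, Prod.exists, Sym2.eq_iff]
  constructor
  · rintro ⟨c, d, ⟨hadj, hc, hd⟩, (⟨rfl, rfl⟩ | ⟨rfl, rfl⟩)⟩
    · exact ⟨hadj, Or.inl ⟨hc, hd⟩⟩
    · exact ⟨hadj.symm, Or.inr ⟨hc, hd⟩⟩
  · rintro ⟨hadj, (⟨ha, hb⟩ | ⟨hb, ha⟩)⟩
    · exact ⟨a, b, ⟨hadj, ha, hb⟩, Or.inl ⟨rfl, rfl⟩⟩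
    · exact ⟨b, a, ⟨hadj.symm, hb, ha⟩, Or.inr ⟨rfl, rfl⟩⟩

lemma cutG_subset_edgeFinset {V : Type*} [Fintype V] [DecidableEq V] (G : SimpleGraph V)
    [DecidableRel G.Adj] (S : Finset V) : cutG G S ⊆ G.edgeFinset := by
  intro e he
  induction e using Sym2.ind with
  | _ a b =>
    rw [mem_cutG] at he
    rw [SimpleGraph.mem_edgeFinset]
    exact he.1

lemma cutG_symmDiff {V : Type*} [Fintype V] [DecidableEq V] (G : SimpleGraph V)
    [DecidableRel G.Adj] (S T : Finset V) :
    symmDiff (cutG G S) (cutG G T) = cutG G (symmDiff S T) := by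
  ext e
  induction e using Sym2.ind with
  | _ a b =>
    simp only [Finset.mem_symmDiff, mem_cutG]
    by_cases h : G.Adj a b <;> tauto

/-- In a minimal signature, every vertex is incident to at most ⌊(n-1)/2⌋
negative edges. -/
theorem minimal_signature_degree_bound {V : Type*} [Fintype V] [DecidableEq V]
    (G : SimpleGraph V) [DecidableRel G.Adj]
    (Sg Sg' : Finset (Sym2 V)) (hSg : Sg ⊆ G.edgeFinset)
    (hequiv : SwEquiv G Sg Sg')
    (hmin : ∀ Sg'' : Finset (Sym2 V), SwEquiv G Sg Sg'' → Sg'.card ≤ Sg''.card) :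
    ∀ v : V, (Sg'.filter (fun e => v ∈ e)).card ≤ (Fintype.card V - 1) / 2 := by
  intro v
  obtain ⟨S, hS⟩ := hequiv
  -- Sg' is a subset of the edge set
  have hSg' : Sg' ⊆ G.edgeFinset := by
    rw [hS]
    intro e he
    rw [Finset.mem_symmDiff] at he
    rcases he with ⟨h1, _⟩ | ⟨h1, _⟩
    · exact hSg h1
    · exact cutG_subset_edgeFinset G S h1
  set B := cutG G {v} with hB
  -- The new signature obtained by switching at v
  have hsw : SwEquiv G Sg (symmDiff Sg' B) := by
    refine ⟨symmDiff S {v}, ?_⟩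
    rw [hS, symmDiff_assoc, cutG_symmDiff]
  have hcard := hmin _ hsw
  -- card of symmDiff
  have hAcard : Sg'.card = (Sg' \ B).card + (Sg' ∩ B).card :=
    (Finset.card_sdiff_add_card_inter Sg' B).symm
  have hsdcard : (symmDiff Sg' B).card = (Sg' \ B).card + (B \ Sg').card := by
    rw [symmDiff_def, Finset.sup_eq_union,
      Finset.card_union_of_disjoint disjoint_sdiff_sdiff]
  have hinter : (Sg' ∩ B).card ≤ (B \ Sg').card := by omega
  -- filter = Sg' ∩ B
  have hfe : Sg'.filter (fun e => v ∈ e) = Sg' ∩ B := by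
    ext e
    induction e using Sym2.ind with
    | _ a b =>
      simp only [Finset.mem_filter, Finset.mem_inter, hB, mem_cutG, Finset.mem_singleton,
        Sym2.mem_iff]
      constructor
      · rintro ⟨he, hv⟩
        have hadj : G.Adj a b := by
          have := hSg' he
          rwa [SimpleGraph.mem_edgeFinset] at this
        refine ⟨he, hadj, ?_⟩
        rcases hv with rfl | rfl
        · exact Or.inl ⟨rfl, fun h => hadj.ne h.symm⟩
        · exact Or.inr ⟨rfl, fun h => hadj.ne h⟩
      · rintro ⟨he, _, (⟨rfl, _⟩ | ⟨rfl, _⟩)⟩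
        · exact ⟨he, Or.inl rfl⟩
        · exact ⟨he, Or.inr rfl⟩
  -- B ∩ Sg' and B \ Sg' partition B
  have hBcard : B.card = (Sg' ∩ B).card + (B \ Sg').card := by
    rw [Finset.inter_comm]
    exact (Finset.card_inter_add_card_sdiff B Sg').symm
  -- B has card ≤ degree of v ≤ n - 1
  have hBdeg : B ⊆ (G.neighborFinset v).image (fun w => s(v, w)) := by
    intro e he
    induction e using Sym2.ind with
    | _ a b =>
      rw [hB, mem_cutG] at he
      obtain ⟨hadj, h⟩ := he
      simp only [Finset.mem_singleton] at h
      rcases h with ⟨rfl, _⟩ | ⟨rfl, _⟩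
      · exact Finset.mem_image.2 ⟨b, by simpa using hadj, rfl⟩
      · exact Finset.mem_image.2 ⟨a, by simpa using hadj.symm, Sym2.eq_swap⟩
  have hBle : B.card ≤ G.degree v := by
    calc B.card ≤ ((G.neighborFinset v).image (fun w => s(v, w))).card :=
          Finset.card_le_card hBdeg
      _ ≤ (G.neighborFinset v).card := Finset.card_image_le
      _ = G.degree v := rfl
  have hdeg : G.degree v < Fintype.card V := G.degree_lt_card_verts v
  rw [hfe]
  have h2 : 2 * (Sg' ∩ B).card ≤ Fintype.card V - 1 := by omega
  omega
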